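/- For the two-phase test, the type-I error probability satisfies limsup_{n→∞} (1/n) log P₁(A₂^τ) ≤ −min{ D(P^(λ₁)‖P₁), γ + k·D(P^(λ)‖P₁) }. -/

import Mathlib

open Real Filter Finset MeasureTheory
open scoped Classical

variable {𝒳 : Type*} [Fintype 𝒳] [DecidableEq 𝒳] [Nonempty 𝒳]

/-- Kullback–Leibler divergence `D(Q‖P)` between pmfs on a finite alphabet. -/
noncomputable def kl (Q P : 𝒳 → ℝ) : ℝ :=
  ∑ x, Q x * Real.log (Q x / P x)

/-- The `λ`-tilted distribution `P^(λ)` of `P₁` and `P₂`. -/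
noncomputable def tilt (P₁ P₂ : 𝒳 → ℝ) (l : ℝ) : 𝒳 → ℝ :=
  fun x => P₁ x ^ (1 - l) * P₂ x ^ l / ∑ a, P₁ a ^ (1 - l) * P₂ a ^ l

/-- Probability of a set of length-`N` sample paths under i.i.d. sampling from `P`. -/
noncomputable def prodProb (P : 𝒳 → ℝ) {N : ℕ} (S : Set (Fin N → 𝒳)) : ℝ :=
  ∑ ω : Fin N → 𝒳, S.indicator (fun ω' => ∏ i, P (ω' i)) ω

/-- The fixed-length error-exponent region `R_FD`. -/
def RFD (P₁ P₂ : 𝒳 → ℝ) : Set (ℝ × ℝ) :=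
  {p | 0 ≤ p.1 ∧ 0 ≤ p.2 ∧
    ∃ l ∈ Set.Icc (0:ℝ) 1,
      p.1 ≤ kl (tilt P₁ P₂ l) P₁ ∧ p.2 ≤ kl (tilt P₁ P₂ l) P₂}

/-- `E₁(γ) = max{D(P^(λ)‖P₁) : λ ∈ [0,1], D(P^(λ)‖P₂) ≥ γ}` (sup of the empty set is 0). -/
noncomputable def E1exp (P₁ P₂ : 𝒳 → ℝ) (γ : ℝ) : ℝ :=
  sSup {E | ∃ l ∈ Set.Icc (0:ℝ) 1, γ ≤ kl (tilt P₁ P₂ l) P₂ ∧ E = kl (tilt P₁ P₂ l) P₁}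

/-- `E₂(γ) = max{D(P^(λ)‖P₂) : λ ∈ [0,1], D(P^(λ)‖P₁) ≥ γ}` (sup of the empty set is 0). -/
noncomputable def E2exp (P₁ P₂ : 𝒳 → ℝ) (γ : ℝ) : ℝ :=
  sSup {E | ∃ l ∈ Set.Icc (0:ℝ) 1, γ ≤ kl (tilt P₁ P₂ l) P₁ ∧ E = kl (tilt P₁ P₂ l) P₂}

/-- A sequential hypothesis test whose stopping time is bounded by `N`:
a stopping time `τ` for the coordinate filtration, together with decision events
`A1`, `A2` that are determined by the samples observed up to time `τ`,
are disjoint, and exhaust the sample space. -/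
structure HypTest (𝒳 : Type*) (N : ℕ) where
  τ : (Fin N → 𝒳) → ℕ
  A1 : Set (Fin N → 𝒳)
  A2 : Set (Fin N → 𝒳)
  tau_le : ∀ ω, τ ω ≤ N
  stopping : ∀ ω ω', (∀ i : Fin N, (i : ℕ) < τ ω → ω i = ω' i) → τ ω' = τ ω
  adapted1 : ∀ ω ω', (∀ i : Fin N, (i : ℕ) < τ ω → ω i = ω' i) → (ω ∈ A1 ↔ ω' ∈ A1)
  adapted2 : ∀ ω ω', (∀ i : Fin N, (i : ℕ) < τ ω → ω i = ω' i) → (ω ∈ A2 ↔ ω' ∈ A2)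
  disj : Disjoint A1 A2
  exhaust : A1 ∪ A2 = Set.univ

/-- `(E₁, E₂)` is achievable by `γ`-almost-fixed-length tests. -/
def AFLAchievable (P₁ P₂ : 𝒳 → ℝ) (γ E₁ E₂ : ℝ) : Prop :=
  0 ≤ E₁ ∧ 0 ≤ E₂ ∧
  ∃ c : ℝ, 0 < c ∧ ∃ l : ℕ, 0 < l ∧
    ∀ δ : ℝ, 0 < δ → ∃ n₀ : ℕ, ∀ n : ℕ, n₀ ≤ n →
      ∃ N : ℕ, (N : ℝ) ≤ c * (n : ℝ) ^ l ∧
        ∃ T : HypTest 𝒳 N,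
          prodProb P₁ {ω | n < T.τ ω} ≤ Real.exp (-(γ * n)) ∧
          prodProb P₂ {ω | n < T.τ ω} ≤ Real.exp (-(γ * n)) ∧
          prodProb P₁ T.A2 ≤ Real.exp (-((E₁ - δ) * n)) ∧
          prodProb P₂ T.A1 ≤ Real.exp (-((E₂ - δ) * n))

/-- `(E₁, E₂, E_Ω)` is achievable by fixed-length tests with a rejection option. -/
def RejAchievable (P₁ P₂ : 𝒳 → ℝ) (E₁ E₂ EΩ : ℝ) : Prop :=
  0 ≤ E₁ ∧ 0 ≤ E₂ ∧ 0 ≤ EΩ ∧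
  ∀ δ : ℝ, 0 < δ → ∃ n₀ : ℕ, ∀ n : ℕ, n₀ ≤ n →
    ∃ A1 A2 AΩ : Set (Fin n → 𝒳),
      Disjoint A1 A2 ∧ Disjoint A1 AΩ ∧ Disjoint A2 AΩ ∧ A1 ∪ A2 ∪ AΩ = Set.univ ∧
      prodProb P₁ A2 ≤ Real.exp (-((E₁ - δ) * n)) ∧
      prodProb P₂ A1 ≤ Real.exp (-((E₂ - δ) * n)) ∧
      prodProb P₁ AΩ + prodProb P₂ AΩ ≤ Real.exp (-((EΩ - δ) * n))

/-- Sum of the log-likelihood ratios of the first `n` samples. -/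
noncomputable def S1 (P₁ P₂ : 𝒳 → ℝ) (n : ℕ) {N : ℕ} (ω : Fin N → 𝒳) : ℝ :=
  ∑ i ∈ Finset.univ.filter (fun i : Fin N => (i : ℕ) < n),
    Real.log (P₁ (ω i) / P₂ (ω i))

/-- Sum of the log-likelihood ratios of the samples after time `n`. -/
noncomputable def S2 (P₁ P₂ : 𝒳 → ℝ) (n : ℕ) {N : ℕ} (ω : Fin N → 𝒳) : ℝ :=
  ∑ i ∈ Finset.univ.filter (fun i : Fin N => n ≤ (i : ℕ)),
    Real.log (P₁ (ω i) / P₂ (ω i))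

/-- Event that the two-phase test (phase-one thresholds `α₁ > β₁`, phase-two threshold `α`)
chooses `H₁`. -/
def twoPhaseA1 (P₁ P₂ : 𝒳 → ℝ) (k n : ℕ) (α₁ β₁ α : ℝ) : Set (Fin ((k + 1) * n) → 𝒳) :=
  {ω | α₁ ≤ S1 P₁ P₂ n ω / n ∨
    (β₁ < S1 P₁ P₂ n ω / n ∧ S1 P₁ P₂ n ω / n < α₁ ∧ α ≤ S2 P₁ P₂ n ω / (k * n))}

/-- Event that the two-phase test chooses `H₂`. -/
def twoPhaseA2 (P₁ P₂ : 𝒳 → ℝ) (k n : ℕ) (α₁ β₁ α : ℝ) : Set (Fin ((k + 1) * n) → 𝒳) :=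
  {ω | S1 P₁ P₂ n ω / n ≤ β₁ ∨
    (β₁ < S1 P₁ P₂ n ω / n ∧ S1 P₁ P₂ n ω / n < α₁ ∧ S2 P₁ P₂ n ω / (k * n) < α)}

/-- Stopping time of the two-phase test: `n` if phase one is decisive, `(k+1)n` otherwise. -/
noncomputable def twoPhaseTau (P₁ P₂ : 𝒳 → ℝ) (k n : ℕ) (α₁ β₁ : ℝ)
    (ω : Fin ((k + 1) * n) → 𝒳) : ℕ :=
  if β₁ < S1 P₁ P₂ n ω / n ∧ S1 P₁ P₂ n ω / n < α₁ then (k + 1) * n else n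

/-! On the event `A₂`, either the first-phase statistic is at most `n β₁`, or it is below `n α₁`
and the second-phase statistic is below `k n α`. Chernoff's bound with the tilting parameters
`λ₁`, resp. `(λ₂, λ)` on the two blocks of samples bounds the `P₁`-probabilities of these events
by `exp (-n D(P^(λ₁)‖P₁))` and `exp (-n (D(P^(λ₂)‖P₁) + k D(P^(λ)‖P₁)))`, and `γ ≤ D(P^(λ₂)‖P₁)`.
A constant sample path at a minimiser of the log-likelihood ratio lies in `A₂`, so its probability
is at least exponentially small and its logarithm is not the junk value `log 0`. -/

section

variable {α : Type*} [Fintype α]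

noncomputable def tiltNorm (P₁ P₂ : α → ℝ) (l : ℝ) : ℝ :=
  ∑ a, P₁ a ^ (1 - l) * P₂ a ^ l

variable {P₁ P₂ : α → ℝ}

noncomputable abbrev tiltThreshold (P₁ P₂ : α → ℝ) (l : ℝ) : ℝ :=
  kl (tilt P₁ P₂ l) P₂ - kl (tilt P₁ P₂ l) P₁

lemma tiltNorm_pos [Nonempty α] (h₁ : ∀ x, 0 < P₁ x) (h₂ : ∀ x, 0 < P₂ x) (l : ℝ) :
    0 < tiltNorm P₁ P₂ l :=
  sum_pos (fun x _ => by have := h₁ x; have := h₂ x; positivity) univ_nonempty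

lemma tilt_nonneg [Nonempty α] (h₁ : ∀ x, 0 < P₁ x) (h₂ : ∀ x, 0 < P₂ x) (l : ℝ) (x : α) :
    0 ≤ tilt P₁ P₂ l x := by
  have := h₁ x; have := h₂ x
  exact div_nonneg (by positivity) (tiltNorm_pos h₁ h₂ l).le

lemma sum_tilt [Nonempty α] (h₁ : ∀ x, 0 < P₁ x) (h₂ : ∀ x, 0 < P₂ x) (l : ℝ) :
    ∑ x, tilt P₁ P₂ l x = 1 := by
  simp only [tilt, ← sum_div]
  exact div_self (tiltNorm_pos h₁ h₂ l).ne'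

lemma tilt_zero (h₁ : ∑ x, P₁ x = 1) : tilt P₁ P₂ 0 = P₁ := by
  ext x
  simp [tilt, h₁]

lemma kl_self (P : α → ℝ) : kl P P = 0 :=
  sum_eq_zero fun x _ => by rcases eq_or_ne (P x) 0 with h | h <;> simp [h]

lemma kl_sub_kl (h₁ : ∀ x, 0 < P₁ x) (h₂ : ∀ x, 0 < P₂ x) (Q : α → ℝ) :
    kl Q P₂ - kl Q P₁ = ∑ x, Q x * log (P₁ x / P₂ x) := by
  rw [kl, kl, ← sum_sub_distrib]
  refine sum_congr rfl fun x _ => ?_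
  rcases eq_or_ne (Q x) 0 with hQ | hQ
  · simp [hQ]
  rw [← mul_sub, log_div hQ (h₂ x).ne', log_div hQ (h₁ x).ne', log_div (h₁ x).ne' (h₂ x).ne']
  ring

lemma rpow_one_sub_mul_rpow_eq {p q : ℝ} (hp : 0 < p) (hq : 0 < q) (c : ℝ) :
    p ^ (1 - c) * q ^ c = exp (-(c * log (p / q))) * p := by
  rw [rpow_def_of_pos hp, rpow_def_of_pos hq, log_div hp.ne' hq.ne', ← exp_add]
  nth_rw 3 [← exp_log hp]
  rw [← exp_add]
  ring_nf

lemma log_tilt_div [Nonempty α] (h₁ : ∀ x, 0 < P₁ x) (h₂ : ∀ x, 0 < P₂ x) (l : ℝ) (x : α) :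
    log (tilt P₁ P₂ l x / P₁ x) = -(l * log (P₁ x / P₂ x)) - log (tiltNorm P₁ P₂ l) := by
  have hZ := tiltNorm_pos h₁ h₂ l
  change log (P₁ x ^ (1 - l) * P₂ x ^ l / tiltNorm P₁ P₂ l / P₁ x) = _
  rw [rpow_one_sub_mul_rpow_eq (h₁ x) (h₂ x), div_right_comm, mul_div_cancel_right₀ _ (h₁ x).ne',
    log_div (exp_pos _).ne' hZ.ne', log_exp]

lemma exp_mul_mul_tiltNorm [Nonempty α] (h₁ : ∀ x, 0 < P₁ x) (h₂ : ∀ x, 0 < P₂ x) (l : ℝ) :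
    exp (l * tiltThreshold P₁ P₂ l) * tiltNorm P₁ P₂ l =
      exp (-kl (tilt P₁ P₂ l) P₁) := by
  have hkl : kl (tilt P₁ P₂ l) P₁ =
      -(l * ∑ x, tilt P₁ P₂ l x * log (P₁ x / P₂ x)) - log (tiltNorm P₁ P₂ l) := by
    calc kl (tilt P₁ P₂ l) P₁
        = ∑ x, (-(l * (tilt P₁ P₂ l x * log (P₁ x / P₂ x))) -
            tilt P₁ P₂ l x * log (tiltNorm P₁ P₂ l)) := by
          simp only [kl, log_tilt_div h₁ h₂]
          exact sum_congr rfl fun x _ => by ring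
      _ = _ := by
          rw [sum_sub_distrib, sum_neg_distrib, ← mul_sum, ← sum_mul, sum_tilt h₁ h₂, one_mul]
  rw [tiltThreshold, kl_sub_kl h₁ h₂, hkl, ← exp_log (tiltNorm_pos h₁ h₂ l), ← exp_add, log_exp]
  ring_nf

lemma exists_le_sum_mul [Nonempty α] {Q : α → ℝ} (hQ : ∀ x, 0 ≤ Q x) (hQ₁ : ∑ x, Q x = 1)
    (f : α → ℝ) : ∃ x₀, f x₀ ≤ ∑ x, Q x * f x := by
  obtain ⟨x₀, -, hmin⟩ := exists_min_image univ f univ_nonempty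
  refine ⟨x₀, ?_⟩
  calc f x₀ = ∑ x, Q x * f x₀ := by rw [← sum_mul, hQ₁, one_mul]
    _ ≤ ∑ x, Q x * f x :=
      sum_le_sum fun x _ => mul_le_mul_of_nonneg_left (hmin x (mem_univ x)) (hQ x)

end

section prodProb

variable {α : Type*} [Fintype α] {P : α → ℝ} {N : ℕ}

lemma prodProb_mono (hP : ∀ x, 0 ≤ P x) {S T : Set (Fin N → α)} (h : S ⊆ T) :
    prodProb P S ≤ prodProb P T :=
  sum_le_sum fun ω _ => Set.indicator_le_indicator_of_subset h
    (fun _ => prod_nonneg fun _ _ => hP _) ω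

lemma prodProb_union_le (hP : ∀ x, 0 ≤ P x) (S T : Set (Fin N → α)) :
    prodProb P (S ∪ T) ≤ prodProb P S + prodProb P T := by
  rw [prodProb, prodProb, prodProb, ← sum_add_distrib]
  refine sum_le_sum fun ω _ => ?_
  rw [← Set.indicator_union_add_inter_apply]
  exact le_add_of_nonneg_right (Set.indicator_nonneg (fun _ _ => prod_nonneg fun _ _ => hP _) ω)

lemma prod_le_prodProb (hP : ∀ x, 0 ≤ P x) {S : Set (Fin N → α)} {ω₀ : Fin N → α}
    (hω₀ : ω₀ ∈ S) :
    ∏ i, P (ω₀ i) ≤ prodProb P S := by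
  have h := single_le_sum (f := fun ω => S.indicator (fun ω' => ∏ i, P (ω' i)) ω)
    (fun ω _ => Set.indicator_nonneg (fun _ _ => prod_nonneg fun _ _ => hP _) ω) (mem_univ ω₀)
  rwa [Set.indicator_of_mem hω₀] at h

end prodProb

section chernoff

variable {α : Type*} [Fintype α] {P₁ P₂ : α → ℝ}

-- Markov's inequality for `exp (∑ wᵢ log (P₁/P₂)(ωᵢ))`; the resulting sum over paths factorises.
lemma prodProb_le_exp_mul_prod_tiltNorm (h₁ : ∀ x, 0 < P₁ x) (h₂ : ∀ x, 0 < P₂ x) {N : ℕ}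
    (w : Fin N → ℝ) (t : ℝ) {S : Set (Fin N → α)}
    (hS : ∀ ω ∈ S, ∑ i, w i * log (P₁ (ω i) / P₂ (ω i)) ≤ t) :
    prodProb P₁ S ≤ exp t * ∏ i, tiltNorm P₁ P₂ (w i) := by
  have hpt : ∀ ω : Fin N → α, S.indicator (fun ω' => ∏ i, P₁ (ω' i)) ω ≤
      exp t * ∏ i, (P₁ (ω i) ^ (1 - w i) * P₂ (ω i) ^ w i) := by
    intro ω
    simp_rw [rpow_one_sub_mul_rpow_eq (h₁ _) (h₂ _), prod_mul_distrib, ← exp_sum, ← mul_assoc,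
      ← exp_add, sum_neg_distrib]
    by_cases hω : ω ∈ S
    · rw [Set.indicator_of_mem hω]
      exact le_mul_of_one_le_left (prod_nonneg fun i _ => (h₁ _).le)
        (one_le_exp (by linarith [hS ω hω]))
    · rw [Set.indicator_of_notMem hω]
      exact mul_nonneg (exp_pos _).le (prod_nonneg fun i _ => (h₁ _).le)
  calc prodProb P₁ S ≤ ∑ ω : Fin N → α, exp t * ∏ i, (P₁ (ω i) ^ (1 - w i) * P₂ (ω i) ^ w i) :=
        sum_le_sum fun ω _ => hpt ω
    _ = exp t * ∏ i, tiltNorm P₁ P₂ (w i) := by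
      rw [← mul_sum]
      unfold tiltNorm
      rw [Fintype.prod_sum]

lemma sum_ite_lt_mul_eq (n : ℕ) {N : ℕ} (μ ν : ℝ) (L : Fin N → ℝ) :
    ∑ i : Fin N, (if (i : ℕ) < n then μ else ν) * L i =
      μ * ∑ i ∈ univ.filter (fun i : Fin N => (i : ℕ) < n), L i +
        ν * ∑ i ∈ univ.filter (fun i : Fin N => n ≤ (i : ℕ)), L i := by
  simp only [ite_mul, sum_ite, ← mul_sum, not_lt]

lemma prod_ite_lt_eq_pow_mul_pow {M : Type*} [CommMonoid M] {n N : ℕ} (h : n ≤ N) (a b : M) :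
    ∏ i : Fin N, (if (i : ℕ) < n then a else b) = a ^ n * b ^ (N - n) := by
  have hcard := card_filter_add_card_filter_not (s := univ) (fun i : Fin N => (i : ℕ) < n)
  rw [card_univ, Fintype.card_fin, Fin.card_filter_val_lt, min_eq_right h] at hcard
  rw [prod_ite, prod_const, prod_const, Fin.card_filter_val_lt, min_eq_right h,
    show #(univ.filter fun i : Fin N => ¬(i : ℕ) < n) = N - n by omega]

lemma prodProb_le_of_twoPhase_llr_le [Nonempty α] (h₁ : ∀ x, 0 < P₁ x) (h₂ : ∀ x, 0 < P₂ x)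
    {k n : ℕ} (μ ν : ℝ) {S : Set (Fin ((k + 1) * n) → α)}
    (hS : ∀ ω ∈ S, μ * S1 P₁ P₂ n ω + ν * S2 P₁ P₂ n ω ≤
      n * (μ * tiltThreshold P₁ P₂ μ) + k * n * (ν * tiltThreshold P₁ P₂ ν)) :
    prodProb P₁ S ≤ exp (-(n * kl (tilt P₁ P₂ μ) P₁ + k * n * kl (tilt P₁ P₂ ν) P₁)) := by
  have hkn : (k + 1) * n - n = k * n := by rw [add_one_mul, Nat.add_sub_cancel]
  have hbound := prodProb_le_exp_mul_prod_tiltNorm h₁ h₂ (fun i => if (i : ℕ) < n then μ else ν)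
    _ fun ω hω => (sum_ite_lt_mul_eq n μ ν _).trans_le (hS ω hω)
  refine hbound.trans_eq ?_
  simp only [apply_ite (tiltNorm P₁ P₂)]
  rw [prod_ite_lt_eq_pow_mul_pow (Nat.le_mul_of_pos_left n k.succ_pos), hkn]
  calc exp (n * (μ * tiltThreshold P₁ P₂ μ) + k * n * (ν * tiltThreshold P₁ P₂ ν)) *
        (tiltNorm P₁ P₂ μ ^ n * tiltNorm P₁ P₂ ν ^ (k * n))
      = (exp (μ * tiltThreshold P₁ P₂ μ) * tiltNorm P₁ P₂ μ) ^ n *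
          (exp (ν * tiltThreshold P₁ P₂ ν) * tiltNorm P₁ P₂ ν) ^ (k * n) := by
        rw [exp_add, ← Nat.cast_mul, exp_nat_mul, exp_nat_mul]
        ring
    _ = exp (-(n * kl (tilt P₁ P₂ μ) P₁ + k * n * kl (tilt P₁ P₂ ν) P₁)) := by
        rw [tiltThreshold, tiltThreshold, exp_mul_mul_tiltNorm h₁ h₂, exp_mul_mul_tiltNorm h₁ h₂,
          ← exp_nat_mul, ← exp_nat_mul, ← exp_add]
        push_cast
        ring_nf

end chernoff

section twoPhase

variable {α : Type*} [Fintype α] {P₁ P₂ : α → ℝ}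

lemma prodProb_twoPhaseA2_le [Nonempty α] (h₁ : ∀ x, 0 < P₁ x) (h₂ : ∀ x, 0 < P₂ x)
    (h₁sum : ∑ x, P₁ x = 1) {k n : ℕ} (hk : 0 < k) (hn : 0 < n) {l₁ l₂ l : ℝ}
    (hl₁ : 0 ≤ l₁) (hl₂ : 0 ≤ l₂) (hl : 0 ≤ l) :
    prodProb P₁ (twoPhaseA2 P₁ P₂ k n (tiltThreshold P₁ P₂ l₂) (tiltThreshold P₁ P₂ l₁)
        (tiltThreshold P₁ P₂ l)) ≤
      exp (-(n * kl (tilt P₁ P₂ l₁) P₁)) +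
        exp (-(n * kl (tilt P₁ P₂ l₂) P₁ + k * n * kl (tilt P₁ P₂ l) P₁)) := by
  have hn' : (0 : ℝ) < n := by exact_mod_cast hn
  have hkn : (0 : ℝ) < k * n := by positivity
  set Ea := {ω : Fin ((k + 1) * n) → α | S1 P₁ P₂ n ω ≤ n * tiltThreshold P₁ P₂ l₁}
  set Eb := {ω : Fin ((k + 1) * n) → α | S1 P₁ P₂ n ω ≤ n * tiltThreshold P₁ P₂ l₂ ∧
    S2 P₁ P₂ n ω ≤ k * n * tiltThreshold P₁ P₂ l}
  have hsub : twoPhaseA2 P₁ P₂ k n (tiltThreshold P₁ P₂ l₂) (tiltThreshold P₁ P₂ l₁)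
      (tiltThreshold P₁ P₂ l) ⊆ Ea ∪ Eb := by
    rintro ω (hfirst | ⟨-, hfirst, hsecond⟩)
    · exact Or.inl ((div_le_iff₀' hn').1 hfirst)
    · exact Or.inr ⟨((div_lt_iff₀' hn').1 hfirst).le, ((div_lt_iff₀' hkn).1 hsecond).le⟩
  have hEa : prodProb P₁ Ea ≤ exp (-(n * kl (tilt P₁ P₂ l₁) P₁)) := by
    have h := prodProb_le_of_twoPhase_llr_le h₁ h₂ l₁ 0 (S := Ea) fun ω hω => by
      have := mul_le_mul_of_nonneg_left hω hl₁
      simp only [zero_mul, mul_zero, add_zero]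
      linarith
    rwa [tilt_zero h₁sum, kl_self, mul_zero, add_zero] at h
  have hEb : prodProb P₁ Eb ≤
      exp (-(n * kl (tilt P₁ P₂ l₂) P₁ + k * n * kl (tilt P₁ P₂ l) P₁)) :=
    prodProb_le_of_twoPhase_llr_le h₁ h₂ l₂ l fun ω hω => by
      have := mul_le_mul_of_nonneg_left hω.1 hl₂
      have := mul_le_mul_of_nonneg_left hω.2 hl
      linarith
  calc _ ≤ prodProb P₁ (Ea ∪ Eb) := prodProb_mono (fun x => (h₁ x).le) hsub
    _ ≤ prodProb P₁ Ea + prodProb P₁ Eb := prodProb_union_le (fun x => (h₁ x).le) Ea Eb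
    _ ≤ _ := add_le_add hEa hEb

lemma pow_le_prodProb_twoPhaseA2 (h₁ : ∀ x, 0 < P₁ x) {k n : ℕ} (hn : 0 < n) {a₁ b₁ a : ℝ}
    {x₀ : α} (hx₀ : log (P₁ x₀ / P₂ x₀) ≤ b₁) :
    (P₁ x₀ ^ (k + 1)) ^ n ≤ prodProb P₁ (twoPhaseA2 P₁ P₂ k n a₁ b₁ a) := by
  have hmem : (fun _ => x₀) ∈ twoPhaseA2 P₁ P₂ k n a₁ b₁ a := by
    left
    change S1 P₁ P₂ n (fun _ : Fin ((k + 1) * n) => x₀) / n ≤ b₁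
    rw [S1, sum_const, Fin.card_filter_val_lt, min_eq_right (Nat.le_mul_of_pos_left n k.succ_pos),
      nsmul_eq_mul, mul_div_cancel_left₀ _ (by positivity)]
    exact hx₀
  have h := prod_le_prodProb (fun x => (h₁ x).le) hmem
  rwa [prod_const, card_univ, Fintype.card_fin, pow_mul] at h

end twoPhase

lemma limsup_log_div_le {a : ℕ → ℝ} {c C m : ℝ} (hc : 0 < c) (hC : 0 < C)
    (hlow : ∀ᶠ n in atTop, c ^ n ≤ a n) (hup : ∀ᶠ n in atTop, a n ≤ C * exp (-(m * n))) :
    limsup (fun n : ℕ => log (a n) / n) atTop ≤ -m := by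
  have hlim : Tendsto (fun n : ℕ => log C / n - m) atTop (nhds (-m)) := by
    simpa using (tendsto_const_div_atTop_nhds_zero_nat (log C)).sub_const m
  refine (limsup_le_limsup ?_ ?_ hlim.isBoundedUnder_le).trans_eq hlim.limsup_eq
  · filter_upwards [hlow, hup, eventually_gt_atTop 0] with n hlo hhi hn
    have hlog := log_le_log ((pow_pos hc n).trans_le hlo) hhi
    rw [log_mul hC.ne' (exp_pos _).ne', log_exp] at hlog
    rw [show log C / n - m = (log C - m * n) / n by field_simp,
      div_le_div_iff_of_pos_right (by positivity)]
    linarith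
  · refine isCoboundedUnder_le_of_eventually_le atTop (x := log c) ?_
    filter_upwards [hlow, eventually_gt_atTop 0] with n hlo hn
    rw [le_div_iff₀ (by positivity), mul_comm, ← log_pow]
    exact log_le_log (pow_pos hc n) hlo

theorem twoPhase_typeI_exponent_general (P₁ P₂ : 𝒳 → ℝ)
    (h1pos : ∀ x, 0 < P₁ x) (h2pos : ∀ x, 0 < P₂ x)
    (h1sum : ∑ x, P₁ x = 1)
    (γ : ℝ)
    (k : ℕ) (hk : 0 < k)
    (l₁ l₂ lam : ℝ)
    (hl₁ : l₁ ∈ Set.Icc (0:ℝ) 1) (hl₂ : l₂ ∈ Set.Icc (0:ℝ) 1)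
    (hlam : lam ∈ Set.Icc (0:ℝ) 1)
    (hmin : min (kl (tilt P₁ P₂ l₁) P₂) (kl (tilt P₁ P₂ l₂) P₁) = γ) :
    Filter.limsup (fun n : ℕ =>
        Real.log (prodProb P₁ (twoPhaseA2 P₁ P₂ k n
          (kl (tilt P₁ P₂ l₂) P₂ - kl (tilt P₁ P₂ l₂) P₁)
          (kl (tilt P₁ P₂ l₁) P₂ - kl (tilt P₁ P₂ l₁) P₁)
          (kl (tilt P₁ P₂ lam) P₂ - kl (tilt P₁ P₂ lam) P₁))) / (n : ℝ))
      Filter.atTop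
      ≤ -(min (kl (tilt P₁ P₂ l₁) P₁) (γ + k * kl (tilt P₁ P₂ lam) P₁)) := by
  set m := min (kl (tilt P₁ P₂ l₁) P₁) (γ + k * kl (tilt P₁ P₂ lam) P₁)
  have hγ : γ ≤ kl (tilt P₁ P₂ l₂) P₁ := hmin ▸ min_le_right _ _
  obtain ⟨x₀, hx₀⟩ := exists_le_sum_mul (tilt_nonneg h1pos h2pos l₁) (sum_tilt h1pos h2pos l₁)
    fun x => log (P₁ x / P₂ x)
  rw [← kl_sub_kl h1pos h2pos] at hx₀
  refine limsup_log_div_le (pow_pos (h1pos x₀) (k + 1)) two_pos ?_ ?_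
  · filter_upwards [eventually_gt_atTop 0] with n hn
    exact pow_le_prodProb_twoPhaseA2 h1pos hn hx₀
  · filter_upwards [eventually_gt_atTop 0] with n hn
    have hn' : (0 : ℝ) ≤ n := n.cast_nonneg
    have hm₁ : m * n ≤ kl (tilt P₁ P₂ l₁) P₁ * n :=
      mul_le_mul_of_nonneg_right (min_le_left _ _) hn'
    have hm₂ : m * n ≤ (kl (tilt P₁ P₂ l₂) P₁ + k * kl (tilt P₁ P₂ lam) P₁) * n :=
      mul_le_mul_of_nonneg_right ((min_le_right _ _).trans (add_le_add_left hγ _)) hn'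
    refine (prodProb_twoPhaseA2_le h1pos h2pos h1sum hk hn hl₁.1 hl₂.1 hlam.1).trans ?_
    rw [two_mul]
    exact add_le_add (exp_le_exp.2 (by linarith)) (exp_le_exp.2 (by linarith))

/-- Type-I error exponent of the two-phase test:
`limsup (1/n) log P₁(A₂^τ) ≤ −min{D(P^(l₁)‖P₁), γ + k·D(P^(λ)‖P₁)}`. -/
theorem twoPhase_typeI_exponent (P₁ P₂ : 𝒳 → ℝ)
    (h1pos : ∀ x, 0 < P₁ x) (h2pos : ∀ x, 0 < P₂ x)
    (h1sum : ∑ x, P₁ x = 1) (h2sum : ∑ x, P₂ x = 1)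
    (hne : P₁ ≠ P₂)
    (ls : ℝ) (hls : ls ∈ Set.Icc (0:ℝ) 1)
    (hchern : kl (tilt P₁ P₂ ls) P₁ = kl (tilt P₁ P₂ ls) P₂)
    (γ : ℝ) (hγ0 : 0 < γ) (hγD : γ ≤ kl (tilt P₁ P₂ ls) P₁)
    (k : ℕ) (hk : 0 < k)
    (l₁ l₂ lam : ℝ)
    (hl₁ : l₁ ∈ Set.Icc (0:ℝ) 1) (hl₂ : l₂ ∈ Set.Icc (0:ℝ) 1)
    (hlam : lam ∈ Set.Icc (0:ℝ) 1) (hord : l₂ ≤ l₁)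
    (hmin : min (kl (tilt P₁ P₂ l₁) P₂) (kl (tilt P₁ P₂ l₂) P₁) = γ) :
    Filter.limsup (fun n : ℕ =>
        Real.log (prodProb P₁ (twoPhaseA2 P₁ P₂ k n
          (kl (tilt P₁ P₂ l₂) P₂ - kl (tilt P₁ P₂ l₂) P₁)
          (kl (tilt P₁ P₂ l₁) P₂ - kl (tilt P₁ P₂ l₁) P₁)
          (kl (tilt P₁ P₂ lam) P₂ - kl (tilt P₁ P₂ lam) P₁))) / (n : ℝ))
      Filter.atTop
      ≤ -(min (kl (tilt P₁ P₂ l₁) P₁) (γ + k * kl (tilt P₁ P₂ lam) P₁)) :=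
  twoPhase_typeI_exponent_general P₁ P₂ h1pos h2pos h1sum γ k hk l₁ l₂ lam hl₁ hl₂ hlam hmin
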